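/- Let d ≥ 1, let m ≥ 1 be an integer, C_m > 0 and 0 < q ≤ 1. Let K : ℝ^d × ℝ^d ∖ Δ → ℂ be such that for each fixed x the map y ↦ K(x,y) is C^m on ℝ^d ∖ {x} and |∂_y^β K(x,y)| ≤ C_m |x−y|^{−(d+|β|)} for all multi-indices β with |β| ≤ m and all x ≠ y. Let Q ⊂ ℝ^d be a cube with center x_0 and side-length ℓ, and let a be an integrable function supported in Q with ∫_{ℝ^d} y^β a(y) dy = 0 for all |β| ≤ m−1 and ∫_Q |a(y)| dy ≤ |Q|^{1−1/q}. Then there exists a constant C > 0, depending only on d and m, such that for every x ∉ 2√d·Q, | ∫_Q K(x,y) a(y) dy | ≤ C C_m |Q|^{−1/q} ( 𝔐(χ_Q)(x) )^{(d+m)/d}. -/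

import Mathlib

open MeasureTheory ENNReal Metric Set
noncomputable section

/-- `ℝ^d` with the Euclidean norm. -/
abbrev Rd (d : ℕ) := EuclideanSpace ℝ (Fin d)

/-- The unit cube `Q_k = k + [0,1)^d` for `k ∈ ℤ^d`. -/
def unitCube (d : ℕ) (k : Fin d → ℤ) : Set (Rd d) :=
  {x | ∀ i, (k i : ℝ) ≤ x i ∧ x i < (k i : ℝ) + 1}

/-- Wiener amalgam quasi-norm `‖f‖_{q,p}` of an `ℝ≥0∞`-valued function on `ℝ^d`:
`( Σ_{k∈ℤ^d} ( ∫_{Q_k} f^q )^{p/q} )^{1/p}`. -/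
def amalgamNorm (d : ℕ) (q p : ℝ) (f : Rd d → ℝ≥0∞) : ℝ≥0∞ :=
  (∑' k : Fin d → ℤ, (∫⁻ x in unitCube d k, f x ^ q) ^ (p / q)) ^ (1 / p)

/-- The closed axis-parallel cube with center `c` and side-length `ℓ`. -/
def cube {d : ℕ} (c : Rd d) (ℓ : ℝ) : Set (Rd d) := {x | ∀ i, |x i - c i| ≤ ℓ / 2}

/-- The Hardy–Littlewood maximal operator (with Euclidean balls). -/
def hlMax {d : ℕ} (f : Rd d → ℝ≥0∞) (x : Rd d) : ℝ≥0∞ :=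
  ⨆ (r : ℝ) (_ : 0 < r), (volume (ball x r))⁻¹ * ∫⁻ y in ball x r, f y

/-! Subtract from `y ↦ K(x,y)` its Taylor polynomial of order `m - 1` at the centre `x₀` of `Q`:
by the vanishing moments of `a`, the polynomial integrates to zero against `a`. For `x ∉ 2√d·Q`
the whole ball `B(x₀, √d ℓ / 2) ⊇ Q` stays at distance `≥ |x - x₀| / 2` from `x`, so the Taylor
remainder is `O(C_m ℓ^m |x - x₀|^{-(d+m)})` on `Q`, and integrating it against `a` gives
`C_m |Q|^{-1/q} (ℓ / |x - x₀|)^{d+m}`. Finally `Q ⊆ B(x, 2|x - x₀|)`, so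
`𝔐(χ_Q)(x) ≳ (ℓ / |x - x₀|)^d`. -/
open scoped Nat

section Cube

variable {d : ℕ}

lemma cube_eq_preimage_pi (c : Rd d) (ℓ : ℝ) :
    cube c ℓ = WithLp.ofLp ⁻¹' Set.pi univ fun i => Icc (c i - ℓ / 2) (c i + ℓ / 2) := by
  ext x
  simp only [cube, mem_ofPred_eq, mem_preimage, mem_pi, mem_univ, forall_true_left, mem_Icc,
    abs_sub_le_iff]
  exact forall_congr' fun i => by constructor <;> rintro ⟨h₁, h₂⟩ <;> constructor <;> linarith

lemma isCompact_cube (c : Rd d) (ℓ : ℝ) : IsCompact (cube c ℓ) := by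
  rw [cube_eq_preimage_pi]
  exact (PiLp.homeomorph 2 fun _ : Fin d => ℝ).isCompact_preimage.mpr
    (isCompact_univ_pi fun _ => isCompact_Icc)

lemma volume_cube (c : Rd d) {ℓ : ℝ} (hℓ : 0 ≤ ℓ) :
    volume (cube c ℓ) = ENNReal.ofReal (ℓ ^ d) := by
  rw [cube_eq_preimage_pi, ENNReal.ofReal_pow hℓ,
    (PiLp.volume_preserving_ofLp (Fin d)).measure_preimage
      (MeasurableSet.univ_pi fun _ => measurableSet_Icc).nullMeasurableSet, volume_pi_pi]
  simp [Real.volume_Icc]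

lemma norm_sub_le_of_mem_cube {c y : Rd d} {ℓ : ℝ} (hℓ : 0 ≤ ℓ) (hy : y ∈ cube c ℓ) :
    ‖y - c‖ ≤ √d * ℓ / 2 := by
  rw [EuclideanSpace.norm_eq, show √d * ℓ / 2 = √(d * (ℓ / 2) ^ 2) by
    rw [Real.sqrt_mul (Nat.cast_nonneg d), Real.sqrt_sq (by positivity)]; ring]
  gcongr
  calc ∑ i, ‖(y - c) i‖ ^ 2 ≤ ∑ _i : Fin d, (ℓ / 2) ^ 2 :=
        Finset.sum_le_sum fun i _ => pow_le_pow_left₀ (norm_nonneg _) (hy i) 2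
    _ = d * (ℓ / 2) ^ 2 := by simp

lemma lt_norm_sub_of_notMem_cube {c x : Rd d} {ℓ : ℝ} (hx : x ∉ cube c ℓ) :
    ℓ / 2 < ‖x - c‖ := by
  simp only [cube, mem_ofPred_eq, not_forall, not_le] at hx
  obtain ⟨i, hi⟩ := hx
  exact hi.trans_le (PiLp.norm_apply_le (x - c) i)

end Cube

lemma inv_volume_ball_mul_volume_le_hlMax {d : ℕ} {s : Set (Rd d)} (hs : MeasurableSet s)
    {x : Rd d} {R : ℝ} (hR : 0 < R) (hsR : s ⊆ ball x R) :
    (volume (ball x R))⁻¹ * volume s ≤ hlMax (s.indicator fun _ => 1) x := by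
  have hint : ∫⁻ y in ball x R, s.indicator (fun _ => (1 : ℝ≥0∞)) y = volume s := by
    rw [lintegral_indicator hs, setLIntegral_one, Measure.restrict_apply hs, inter_eq_left.mpr hsR]
  rw [← hint]
  exact le_iSup₂ (f := fun r (_ : 0 < r) =>
    (volume (ball x r))⁻¹ * ∫⁻ y in ball x r, s.indicator (fun _ => (1 : ℝ≥0∞)) y) R hR

section Multilinear

variable {d k : ℕ} {F : Type*} [NormedAddCommGroup F] [NormedSpace ℝ F]

lemma ContinuousMultilinearMap.apply_const_eq_sum_single
    (Φ : ContinuousMultilinearMap ℝ (fun _ : Fin k => Rd d) F) (v : Rd d) :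
    Φ (fun _ => v) = ∑ L : Fin k → Fin d,
      (∏ s, v (L s)) • Φ (fun s => EuclideanSpace.single (L s) 1) := by
  conv_lhs => rw [← (EuclideanSpace.basisFun (Fin d) ℝ).sum_repr v]
  simp only [EuclideanSpace.basisFun_repr, EuclideanSpace.basisFun_apply, Φ.map_sum,
    Φ.map_smul_univ]

lemma ContinuousMultilinearMap.norm_apply_const_le
    (Φ : ContinuousMultilinearMap ℝ (fun _ : Fin k => Rd d) F) (v : Rd d) {M : ℝ}
    (hM : ∀ L : Fin k → Fin d, ‖Φ (fun s => EuclideanSpace.single (L s) 1)‖ ≤ M) :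
    ‖Φ (fun _ => v)‖ ≤ d ^ k * ‖v‖ ^ k * M := by
  have hterm : ∀ L : Fin k → Fin d,
      ‖(∏ s, v (L s)) • Φ (fun s => EuclideanSpace.single (L s) 1)‖ ≤ ‖v‖ ^ k * M := by
    intro L
    rw [norm_smul, norm_prod]
    refine mul_le_mul ?_ (hM L) (norm_nonneg _) (by positivity)
    simpa using Finset.prod_le_prod (s := Finset.univ) (fun s _ => norm_nonneg _)
      fun s _ => PiLp.norm_apply_le v (L s)
  calc ‖Φ (fun _ => v)‖ ≤ ∑ _L : Fin k → Fin d, ‖v‖ ^ k * M := by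
        rw [Φ.apply_const_eq_sum_single]
        exact (norm_sum_le _ _).trans (Finset.sum_le_sum fun L _ => hterm L)
    _ = d ^ k * ‖v‖ ^ k * M := by simp [mul_assoc]

open MvPolynomial in
lemma ContinuousMultilinearMap.exists_totalDegree_le_apply_const_sub_eq_eval
    (Φ : ContinuousMultilinearMap ℝ (fun _ : Fin k => Rd d) ℂ) (c : Rd d) :
    ∃ p : MvPolynomial (Fin d) ℂ, p.totalDegree ≤ k ∧
      ∀ y : Rd d, Φ (fun _ => y - c) = eval (fun i => (y i : ℂ)) p := by
  refine ⟨∑ L : Fin k → Fin d, MvPolynomial.C (Φ fun s => EuclideanSpace.single (L s) 1) *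
      ∏ s, (X (L s) - MvPolynomial.C (c (L s) : ℂ)), ?_, fun y => ?_⟩
  · refine totalDegree_finsetSum_le fun L _ => (totalDegree_mul _ _).trans ?_
    rw [totalDegree_C, zero_add]
    refine ((totalDegree_finsetProd _ _).trans (Finset.sum_le_sum fun s _ =>
      (totalDegree_sub_C_le _ _).trans (totalDegree_X (L s)).le)).trans ?_
    simp
  · rw [Φ.apply_const_eq_sum_single]
    simp [Complex.real_smul, mul_comm]

lemma setIntegral_eval_mul_eq_zero_of_moments {d n : ℕ} {s : Set (Rd d)} (hs : IsCompact s)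
    {a : Rd d → ℂ} (ha : IntegrableOn a s)
    (hmom : ∀ β : Fin d → ℕ, ∑ i, β i ≤ n → ∫ y in s, (∏ i, (y i : ℂ) ^ β i) * a y = 0)
    {p : MvPolynomial (Fin d) ℂ} (hp : p.totalDegree ≤ n) :
    ∫ y in s, MvPolynomial.eval (fun i => (y i : ℂ)) p * a y = 0 := by
  have hint : ∀ β : Fin d →₀ ℕ, IntegrableOn (fun y : Rd d => (∏ i, (y i : ℂ) ^ β i) * a y) s :=
    fun β => ha.continuousOn_mul (by fun_prop) hs
  simp_rw [MvPolynomial.eval_eq', Finset.sum_mul, mul_assoc]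
  rw [integral_finsetSum _ fun β _ => (hint β).const_mul _]
  refine Finset.sum_eq_zero fun β hβ => ?_
  rw [integral_const_mul, hmom β ((Finsupp.sum_fintype _ _ fun _ => rfl).symm.le.trans
    ((MvPolynomial.le_totalDegree hβ).trans hp)), mul_zero]

section Taylor

variable {E F : Type*} [NormedAddCommGroup E] [NormedSpace ℝ E] [NormedAddCommGroup F]
  [NormedSpace ℝ F]

def taylorEval (f : E → F) (n : ℕ) (c y : E) : F :=
  ∑ k ∈ Finset.range (n + 1), (k ! : ℝ)⁻¹ • iteratedFDeriv ℝ k f c (fun _ => y - c)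

lemma norm_sub_taylorEval_le [CompleteSpace F] {f : E → F} {n : ℕ} {c y : E} {B : ℝ}
    (hf : ∀ t ∈ Icc (0 : ℝ) 1, ContDiffAt ℝ (n + 1) f (c + t • (y - c)))
    (hB : ∀ t ∈ Icc (0 : ℝ) 1,
      ‖iteratedFDeriv ℝ (n + 1) f (c + t • (y - c)) (fun _ => y - c)‖ ≤ B) :
    ‖f y - taylorEval f n c y‖ ≤ B / n ! := by
  have htaylor := map_add_eq_sum_add_integral_iteratedFDeriv hf
  rw [add_sub_cancel] at htaylor
  rw [taylorEval, htaylor, add_sub_cancel_left, norm_smul, norm_inv, Real.norm_natCast,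
    inv_mul_le_iff₀ (by positivity), mul_div_cancel₀ _ (by positivity)]
  refine (intervalIntegral.norm_integral_le_of_norm_le_const fun t ht => ?_).trans_eq
    (by simp : B * |(1 : ℝ) - 0| = B)
  rw [uIoc_of_le zero_le_one] at ht
  have hB' := hB t (Ioc_subset_Icc_self ht)
  rw [norm_smul, norm_pow, Real.norm_of_nonneg (by linarith [ht.2])]
  exact (mul_le_of_le_one_left (norm_nonneg _)
    (pow_le_one₀ (by linarith [ht.2]) (by linarith [ht.1]))).trans hB'

end Taylor

open MvPolynomial in
lemma exists_totalDegree_le_taylorEval_eq_eval {d : ℕ} (f : Rd d → ℂ) (n : ℕ) (c : Rd d) :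
    ∃ p : MvPolynomial (Fin d) ℂ, p.totalDegree ≤ n ∧
      ∀ y : Rd d, taylorEval f n c y = eval (fun i => (y i : ℂ)) p := by
  choose P hPdeg hPeval using fun k =>
    (iteratedFDeriv ℝ k f c).exists_totalDegree_le_apply_const_sub_eq_eval c
  refine ⟨∑ k ∈ Finset.range (n + 1), MvPolynomial.C ((k ! : ℂ)⁻¹) * P k, ?_, fun y => ?_⟩
  · refine totalDegree_finsetSum_le fun k hk => (totalDegree_mul _ _).trans ?_
    rw [totalDegree_C, zero_add]
    exact (hPdeg k).trans (Nat.lt_succ_iff.mp (Finset.mem_range.mp hk))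
  · simp [taylorEval, hPeval, Complex.real_smul]

theorem norm_setIntegral_mul_le_of_moments_eq_zero {d n : ℕ} {s : Set (Rd d)}
    (hs : IsCompact s) {a : Rd d → ℂ} (ha : IntegrableOn a s)
    (hmom : ∀ β : Fin d → ℕ, ∑ i, β i ≤ n → ∫ y in s, (∏ i, (y i : ℂ) ^ β i) * a y = 0)
    {f : Rd d → ℂ} {c : Rd d} {ρ M : ℝ} (hsρ : s ⊆ closedBall c ρ)
    (hf : ∀ z ∈ closedBall c ρ, ContDiffAt ℝ (n + 1) f z) (hM0 : 0 ≤ M)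
    (hM : ∀ z ∈ closedBall c ρ, ∀ L : Fin (n + 1) → Fin d,
      ‖iteratedFDeriv ℝ (n + 1) f z (fun i => EuclideanSpace.single (L i) 1)‖ ≤ M) :
    ‖∫ y in s, f y * a y‖ ≤ d ^ (n + 1) * ρ ^ (n + 1) * M / n ! * ∫ y in s, ‖a y‖ := by
  obtain ⟨p, hpdeg, hpeval⟩ := exists_totalDegree_le_taylorEval_eq_eval f n c
  have hseg : ∀ y ∈ s, ∀ t ∈ Icc (0 : ℝ) 1, c + t • (y - c) ∈ closedBall c ρ := by
    intro y hy t ht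
    rw [mem_closedBall_iff_norm, add_sub_cancel_left, norm_smul, Real.norm_of_nonneg ht.1]
    exact (mul_le_of_le_one_left (norm_nonneg _) ht.2).trans
      (mem_closedBall_iff_norm.mp (hsρ hy))
  have htaylor : ∀ y ∈ s, ‖f y - taylorEval f n c y‖ ≤ d ^ (n + 1) * ρ ^ (n + 1) * M / n ! := by
    intro y hy
    refine norm_sub_taylorEval_le (fun t ht => hf _ (hseg y hy t ht)) fun t ht => ?_
    refine ((iteratedFDeriv ℝ (n + 1) f _).norm_apply_const_le _ (hM _ (hseg y hy t ht))).trans ?_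
    gcongr
    exact mem_closedBall_iff_norm.mp (hsρ hy)
  have hTint : IntegrableOn (fun y => taylorEval f n c y * a y) s := by
    simp_rw [hpeval]
    exact ha.continuousOn_mul ((MvPolynomial.continuous_eval p).comp (by fun_prop)).continuousOn hs
  have hTcancel : ∫ y in s, taylorEval f n c y * a y = 0 := by
    simp_rw [hpeval]
    exact setIntegral_eval_mul_eq_zero_of_moments hs ha hmom hpdeg
  have hfint : IntegrableOn (fun y => f y * a y) s :=
    ha.continuousOn_mul (fun z hz => (hf z (hsρ hz)).continuousAt.continuousWithinAt) hs
  calc ‖∫ y in s, f y * a y‖ = ‖∫ y in s, (f y - taylorEval f n c y) * a y‖ := by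
        simp_rw [sub_mul]
        rw [integral_sub hfint hTint, hTcancel, sub_zero]
    _ ≤ ∫ y in s, d ^ (n + 1) * ρ ^ (n + 1) * M / n ! * ‖a y‖ := by
        refine norm_integral_le_of_norm_le (ha.norm.const_mul _)
          (ae_restrict_of_forall_mem hs.measurableSet fun y hy => ?_)
        rw [norm_mul]
        exact mul_le_mul_of_nonneg_right (htaylor y hy) (norm_nonneg _)
    _ = d ^ (n + 1) * ρ ^ (n + 1) * M / n ! * ∫ y in s, ‖a y‖ := integral_const_mul _ _

lemma norm_iteratedFDeriv_apply_single_le_of_kernel_bound {d m : ℕ} {K : Rd d → ℂ} {x z : Rd d}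
    {Cm δ : ℝ} (hCm : 0 ≤ Cm)
    (hKb : ∀ y : Rd d, x ≠ y → ∀ j, j ≤ m → ∀ L : Fin j → Fin d,
      ‖iteratedFDerivWithin ℝ j K {x}ᶜ y (fun s => EuclideanSpace.single (L s) (1 : ℝ))‖ ≤
        Cm * dist x y ^ (-((d : ℝ) + j)))
    (hδ : 0 < δ) (hz : δ ≤ dist x z) {j : ℕ} (hj : j ≤ m) (L : Fin j → Fin d) :
    ‖iteratedFDeriv ℝ j K z (fun s => EuclideanSpace.single (L s) 1)‖ ≤ Cm / δ ^ (d + j) := by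
  have hzx : z ∈ ({x}ᶜ : Set (Rd d)) := fun h => (dist_self x ▸ h ▸ hz).not_gt hδ
  rw [← iteratedFDerivWithin_of_isOpen j isOpen_compl_singleton hzx, div_eq_mul_inv,
    ← Real.rpow_natCast, ← Real.rpow_neg hδ.le, Nat.cast_add]
  exact (hKb z (Ne.symm hzx) j hj L).trans (mul_le_mul_of_nonneg_left
    (Real.rpow_le_rpow_of_nonpos hδ hz (neg_nonpos.mpr (by positivity))) hCm)

theorem norm_setIntegral_kernel_mul_le {d n : ℕ} {K : Rd d → ℂ} {Cm q ℓ : ℝ} {x₀ x : Rd d}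
    {a : Rd d → ℂ} (hCm : 0 ≤ Cm) (hℓ : 0 < ℓ) (hK : ContDiffOn ℝ (n + 1) K {x}ᶜ)
    (hKb : ∀ y : Rd d, x ≠ y → ∀ j, j ≤ n + 1 → ∀ L : Fin j → Fin d,
      ‖iteratedFDerivWithin ℝ j K {x}ᶜ y (fun s => EuclideanSpace.single (L s) (1 : ℝ))‖ ≤
        Cm * dist x y ^ (-((d : ℝ) + j)))
    (ha : IntegrableOn a (cube x₀ ℓ))
    (hmom : ∀ β : Fin d → ℕ, ∑ i, β i ≤ n → ∫ y in cube x₀ ℓ, (∏ i, (y i : ℂ) ^ β i) * a y = 0)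
    (hsize : ∫ y in cube x₀ ℓ, ‖a y‖ ≤ (ℓ ^ d) ^ (1 - 1 / q)) (hx : √d * ℓ < ‖x - x₀‖) :
    ‖∫ y in cube x₀ ℓ, K y * a y‖ ≤
      d ^ (n + 1) * √d ^ (n + 1) * 2 ^ d / n ! * Cm * (ℓ ^ d) ^ (-(1 / q)) *
        (ℓ / ‖x - x₀‖) ^ (d + (n + 1)) := by
  set r := ‖x - x₀‖
  have hr : 0 < r := (by positivity : 0 ≤ √d * ℓ).trans_lt hx
  have hfar : ∀ z ∈ closedBall x₀ (√d * ℓ / 2), r / 2 ≤ dist x z := fun z hz => by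
    rw [mem_closedBall_iff_norm] at hz
    rw [dist_eq_norm, ← sub_sub_sub_cancel_right x z x₀]
    linarith [norm_sub_norm_le (x - x₀) (z - x₀)]
  have hbound := norm_setIntegral_mul_le_of_moments_eq_zero (isCompact_cube x₀ ℓ) ha hmom
    (fun y hy => mem_closedBall_iff_norm.mpr (norm_sub_le_of_mem_cube hℓ.le hy))
    (fun z hz => hK.contDiffAt (isOpen_compl_singleton.mem_nhds
      fun h => (dist_self x ▸ h ▸ hfar z hz).not_gt (half_pos hr)))
    (by positivity : 0 ≤ Cm / (r / 2) ^ (d + (n + 1)))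
    fun z hz L => norm_iteratedFDeriv_apply_single_le_of_kernel_bound hCm hKb (half_pos hr)
      (hfar z hz) le_rfl L
  refine (hbound.trans (mul_le_mul_of_nonneg_left hsize (by positivity))).trans_eq ?_
  rw [sub_eq_add_neg, Real.rpow_add (by positivity), Real.rpow_one]
  simp only [div_pow, mul_pow, pow_add]
  field_simp

lemma ofReal_div_pow_le_hlMax_indicator_cube {d : ℕ} {x₀ x : Rd d} {ℓ : ℝ} (hℓ : 0 ≤ ℓ)
    (hx : √d * ℓ < ‖x - x₀‖) :
    ENNReal.ofReal ((ℓ / ‖x - x₀‖) ^ d) ≤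
      ENNReal.ofReal (2 ^ d * (volume (ball (0 : Rd d) 1)).toReal) *
        hlMax ((cube x₀ ℓ).indicator fun _ => 1) x := by
  set r := ‖x - x₀‖
  have hr : 0 < r := (by positivity : 0 ≤ √d * ℓ).trans_lt hx
  have hω : 0 < (volume (ball (0 : Rd d) 1)).toReal :=
    ENNReal.toReal_pos (measure_ball_pos _ _ one_pos).ne' measure_ball_lt_top.ne
  have hsub : cube x₀ ℓ ⊆ ball x (2 * r) := fun y hy => by
    rw [mem_ball]
    calc dist y x ≤ dist y x₀ + dist x x₀ := dist_triangle_right _ _ _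
      _ < 2 * r := by
        rw [dist_eq_norm, dist_eq_norm]
        linarith [norm_sub_le_of_mem_cube hℓ hy, (by positivity : 0 ≤ √d * ℓ)]
  have hmax := inv_volume_ball_mul_volume_le_hlMax (isCompact_cube x₀ ℓ).measurableSet
    (by positivity) hsub
  rw [volume_cube x₀ hℓ, Measure.addHaar_ball_of_pos _ _ (by positivity),
    finrank_euclideanSpace_fin, ← ENNReal.ofReal_toReal measure_ball_lt_top.ne,
    ← ENNReal.ofReal_mul (by positivity), ← ENNReal.ofReal_inv_of_pos (by positivity),
    ← ENNReal.ofReal_mul (by positivity)] at hmax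
  calc ENNReal.ofReal ((ℓ / r) ^ d)
      = ENNReal.ofReal (2 ^ d * (volume (ball (0 : Rd d) 1)).toReal) *
          ENNReal.ofReal (((2 * r) ^ d * (volume (ball (0 : Rd d) 1)).toReal)⁻¹ * ℓ ^ d) := by
        rw [← ENNReal.ofReal_mul (by positivity)]
        congr 1
        simp only [div_pow, mul_pow]
        field_simp
    _ ≤ _ := by gcongr

lemma pow_rpow_add_div_self {x : ℝ} (hx : 0 ≤ x) {d : ℕ} (hd : d ≠ 0) (k : ℕ) :
    (x ^ d) ^ (((d : ℝ) + k) / d) = x ^ (d + k) := by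
  rw [← Real.rpow_natCast x d, ← Real.rpow_mul hx, mul_div_cancel₀ _ (by positivity),
    ← Nat.cast_add, Real.rpow_natCast]

/-- A partial derivative `∂_y^β` of order `j = |β|` is encoded as the `j`-th iterated derivative
evaluated on coordinate directions. -/
theorem statement10 {d : ℕ} (hd : 1 ≤ d) (m : ℕ) (hm : 1 ≤ m) :
    ∃ C : ℝ, 0 < C ∧
      ∀ Cm : ℝ, 0 < Cm → ∀ q : ℝ, 0 < q → q ≤ 1 →
      ∀ K : Rd d → Rd d → ℂ,
        (∀ x : Rd d, ContDiffOn ℝ m (fun y => K x y) {x}ᶜ) →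
        (∀ x y : Rd d, x ≠ y → ∀ j, j ≤ m → ∀ L : Fin j → Fin d,
          ‖iteratedFDerivWithin ℝ j (fun y' => K x y') {x}ᶜ y
              (fun s => EuclideanSpace.single (L s) (1 : ℝ))‖ ≤
            Cm * dist x y ^ (-((d : ℝ) + j))) →
      ∀ (x₀ : Rd d) (ℓ : ℝ), 0 < ℓ →
      ∀ a : Rd d → ℂ, IntegrableOn a (cube x₀ ℓ) → (∀ x ∉ cube x₀ ℓ, a x = 0) →
        (∀ β : Fin d → ℕ, (∑ i, β i) ≤ m - 1 →
          ∫ y, (∏ i, (y i : ℂ) ^ β i) * a y = 0) →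
        (∫ y in cube x₀ ℓ, ‖a y‖) ≤ (ℓ ^ d) ^ (1 - 1 / q) →
      ∀ x ∉ cube x₀ (2 * Real.sqrt d * ℓ),
        (‖∫ y in cube x₀ ℓ, K x y * a y‖₊ : ℝ≥0∞) ≤
          ENNReal.ofReal (C * Cm) * ENNReal.ofReal ((ℓ ^ d) ^ (-(1 / q))) *
            hlMax ((cube x₀ ℓ).indicator fun _ => 1) x ^ (((d : ℝ) + m) / d) := by
  obtain ⟨n, rfl⟩ : ∃ n, m = n + 1 := ⟨m - 1, by omega⟩
  set ω := (volume (ball (0 : Rd d) 1)).toReal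
  set p : ℝ := ((d : ℝ) + ((n + 1 : ℕ) : ℝ)) / d
  have hω : 0 < ω := ENNReal.toReal_pos (measure_ball_pos _ _ one_pos).ne' measure_ball_lt_top.ne
  set A : ℝ := d ^ (n + 1) * √d ^ (n + 1) * 2 ^ d / (n ! : ℝ)
  refine ⟨A * (2 ^ d * ω) ^ p, by positivity, ?_⟩
  intro Cm hCm q _ _ K hK hKb x₀ ℓ hℓ a ha hsupp hmom hsize x hx
  have hfar : √d * ℓ < ‖x - x₀‖ := by
    simpa [mul_assoc, mul_div_assoc] using lt_norm_sub_of_notMem_cube hx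
  have hmom' : ∀ β : Fin d → ℕ, ∑ i, β i ≤ n →
      ∫ y in cube x₀ ℓ, (∏ i, (y i : ℂ) ^ β i) * a y = 0 := fun β hβ => by
    rw [setIntegral_eq_integral_of_forall_compl_eq_zero fun y hy => by rw [hsupp y hy, mul_zero]]
    exact hmom β (by omega)
  have hdecay := norm_setIntegral_kernel_mul_le hCm.le hℓ (hK x) (hKb x) ha hmom' hsize hfar
  rw [← pow_rpow_add_div_self (by positivity) (by omega) (n + 1)] at hdecay
  have hmax := ofReal_div_pow_le_hlMax_indicator_cube hℓ.le hfar
  calc (‖∫ y in cube x₀ ℓ, K x y * a y‖₊ : ℝ≥0∞)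
      ≤ ENNReal.ofReal (A * Cm) * ENNReal.ofReal ((ℓ ^ d) ^ (-(1 / q))) *
          ENNReal.ofReal ((ℓ / ‖x - x₀‖) ^ d) ^ p := by
        rw [ENNReal.ofReal_rpow_of_nonneg (x := (ℓ / ‖x - x₀‖) ^ d) (by positivity) (by positivity),
          ← ENNReal.ofReal_mul (by positivity), ← ENNReal.ofReal_mul (by positivity)]
        exact (ofReal_norm _).symm.trans_le (ENNReal.ofReal_le_ofReal hdecay)
    _ ≤ ENNReal.ofReal (A * Cm) * ENNReal.ofReal ((ℓ ^ d) ^ (-(1 / q))) *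
          (ENNReal.ofReal (2 ^ d * ω) * hlMax ((cube x₀ ℓ).indicator fun _ => 1) x) ^ p := by
        gcongr
    _ = _ := by
        rw [ENNReal.mul_rpow_of_nonneg _ _ (by positivity),
          ENNReal.ofReal_rpow_of_nonneg (by positivity) (by positivity),
          mul_right_comm A, ENNReal.ofReal_mul (p := A * Cm) (by positivity)]
        ring
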